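/- Let A, B be n×n positive semi-definite matrices and 1 ≤ q ≤ 2. Then there exists a unitary matrix V such that (A^q + B^q)/2 ≤ V((A+B)/2)^q V* + |(A−B)/2|^q + ((λ₁(A)−λ_n(A))^q + (λ₁(B)−λ_n(B))^q)/2 · I. -/

import Mathlib

open Matrix
open scoped ComplexOrder

/-- A function `f : [0,∞) → ℝ` is superquadratic if for every `t ≥ 0` there is a constant
`C` with `f s ≥ f t + C * (s - t) + f |s - t|` for all `s ≥ 0`. -/
def Superquadratic (f : ℝ → ℝ) : Prop :=
  ∀ t : ℝ, 0 ≤ t → ∃ C : ℝ, ∀ s : ℝ, 0 ≤ s → f t + C * (s - t) + f |s - t| ≤ f s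

/-- Apply a real function to a matrix via the functional calculus (junk value `0` if the
matrix is not Hermitian). -/
noncomputable def mfun {n : ℕ} (f : ℝ → ℝ) (A : Matrix (Fin n) (Fin n) ℂ) :
    Matrix (Fin n) (Fin n) ℂ :=
  if h : A.IsHermitian then h.cfc f else 0

/-- `|A| = √(Aᴴ A)`. -/
noncomputable def matAbs {n : ℕ} (A : Matrix (Fin n) (Fin n) ℂ) : Matrix (Fin n) (Fin n) ℂ :=
  (Matrix.posSemidef_conjTranspose_mul_self A).1.eigenvectorUnitary.1 *
    diagonal (((↑) : ℝ → ℂ) ∘ (√·) ∘ (Matrix.posSemidef_conjTranspose_mul_self A).1.eigenvalues) *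
    (star (Matrix.posSemidef_conjTranspose_mul_self A).1.eigenvectorUnitary : Matrix (Fin n) (Fin n) ℂ)

/-- Largest eigenvalue of a Hermitian matrix (junk value `0` otherwise). -/
noncomputable def lmax {n : ℕ} (A : Matrix (Fin n) (Fin n) ℂ) : ℝ :=
  if h : A.IsHermitian then ⨆ i, h.eigenvalues i else 0

/-- Smallest eigenvalue of a Hermitian matrix (junk value `0` otherwise). -/
noncomputable def lmin {n : ℕ} (A : Matrix (Fin n) (Fin n) ℂ) : ℝ :=
  if h : A.IsHermitian then ⨅ i, h.eigenvalues i else 0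

/-- `k`-th largest eigenvalue (`k = 0` gives the largest) of a Hermitian matrix
(junk value `0` otherwise). -/
noncomputable def lkth {n : ℕ} (A : Matrix (Fin n) (Fin n) ℂ) (k : Fin n) : ℝ :=
  if h : A.IsHermitian then (h.eigenvalues ∘ Tuple.sort h.eigenvalues) k.rev else 0

/-- The quadratic form `⟨Ax, x⟩` as a complex number. -/
noncomputable def qf {n : ℕ} (A : Matrix (Fin n) (Fin n) ℂ) (x : Fin n → ℂ) : ℂ :=
  star x ⬝ᵥ A *ᵥ x

/-- Löwner order: `A ⊑ B` iff `B - A` is positive semidefinite. -/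
def Loewner {n : ℕ} (A B : Matrix (Fin n) (Fin n) ℂ) : Prop :=
  (B - A).PosSemidef


section Auxiliary

open Real in


lemma rpow_subadd {a b p : ℝ} (ha : 0 ≤ a) (hb : 0 ≤ b) (hp : 0 ≤ p) (hp1 : p ≤ 1) :
    (a + b) ^ p ≤ a ^ p + b ^ p := by
  lift a to NNReal using ha
  lift b to NNReal using hb
  exact_mod_cast NNReal.rpow_add_le_add_rpow a b hp hp1

lemma subquad (q : ℝ) (hq1 : 1 ≤ q) (hq2 : q ≤ 2) {s t : ℝ} (hs : 0 ≤ s) (ht : 0 ≤ t) :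
    s ^ q ≤ t ^ q + q * t ^ (q - 1) * (s - t) + |s - t| ^ q := by
  have hq0 : q ≠ 0 := by linarith
  have hp0 : 0 ≤ q - 1 := by linarith
  have hp1 : q - 1 ≤ 1 := by linarith
  rcases le_or_gt t s with h | h
  · -- s ≥ t, use g₊
    rw [abs_of_nonneg (by linarith)]
    set g : ℝ → ℝ := fun s => t ^ q + q * t ^ (q - 1) * (s - t) + (s - t) ^ q - s ^ q with hg
    have hd : ∀ u : ℝ, HasDerivAt g
        (q * t ^ (q - 1) + q * (u - t) ^ (q - 1) * 1 - q * u ^ (q - 1) * 1) u := by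
      intro u
      have h1 : HasDerivAt (fun s : ℝ => (s - t) ^ q) (q * (u - t) ^ (q - 1) * 1) u := by
        have := ((hasDerivAt_id u).sub_const t).rpow_const (p := q) (Or.inr hq1)
        simp only [id_eq] at this
        convert this using 1; ring
      have h2 : HasDerivAt (fun s : ℝ => s ^ q) (q * u ^ (q - 1) * 1) u := by
        have := (hasDerivAt_id u).rpow_const (p := q) (Or.inr hq1)
        simp only [id_eq] at this
        convert this using 1; ring
      have h3 : HasDerivAt (fun s : ℝ => t ^ q + q * t ^ (q - 1) * (s - t))
          (q * t ^ (q - 1)) u := by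
        simpa using (((hasDerivAt_id u).sub_const t).const_mul (q * t ^ (q - 1))).const_add (t ^ q)
      exact (h3.add h1).sub h2
    have hmono : MonotoneOn g (Set.Ici t) := by
      apply monotoneOn_of_deriv_nonneg (convex_Ici t)
      · exact fun u _ => ((hd u).continuousAt).continuousWithinAt
      · exact fun u _ => ((hd u).differentiableAt).differentiableWithinAt
      · intro u hu
        rw [interior_Ici] at hu
        rw [(hd u).deriv]
        have hsub : u ^ (q - 1) ≤ t ^ (q - 1) + (u - t) ^ (q - 1) := by
          have := rpow_subadd ht (by linarith [hu.out] : (0:ℝ) ≤ u - t) hp0 hp1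
          simpa using this
        nlinarith [hsub]
    have h0 : g t = 0 := by simp [hg, Real.zero_rpow hq0]
    have := hmono (Set.mem_Ici.2 le_rfl) (Set.mem_Ici.2 h) h
    rw [h0] at this
    simp only [hg] at this
    linarith
  · -- s < t
    rw [abs_of_neg (by linarith)]
    set g : ℝ → ℝ := fun s => t ^ q + q * t ^ (q - 1) * (s - t) + (-(s - t)) ^ q - s ^ q with hg
    have hd : ∀ u : ℝ, HasDerivAt g
        (q * t ^ (q - 1) + q * (-(u - t)) ^ (q - 1) * (-1) - q * u ^ (q - 1) * 1) u := by
      intro u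
      have h1 : HasDerivAt (fun s : ℝ => (-(s - t)) ^ q) (q * (-(u - t)) ^ (q - 1) * (-1)) u := by
        have := (((hasDerivAt_id u).sub_const t).neg).rpow_const (p := q) (Or.inr hq1)
        simp only [id_eq, Pi.neg_apply] at this
        convert this using 1; ring
      have h2 : HasDerivAt (fun s : ℝ => s ^ q) (q * u ^ (q - 1) * 1) u := by
        have := (hasDerivAt_id u).rpow_const (p := q) (Or.inr hq1)
        simp only [id_eq] at this
        convert this using 1; ring
      have h3 : HasDerivAt (fun s : ℝ => t ^ q + q * t ^ (q - 1) * (s - t))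
          (q * t ^ (q - 1)) u := by
        simpa using (((hasDerivAt_id u).sub_const t).const_mul (q * t ^ (q - 1))).const_add (t ^ q)
      exact (h3.add h1).sub h2
    have hanti : AntitoneOn g (Set.Icc 0 t) := by
      apply antitoneOn_of_deriv_nonpos (convex_Icc 0 t)
      · exact fun u _ => ((hd u).continuousAt).continuousWithinAt
      · exact fun u _ => ((hd u).differentiableAt).differentiableWithinAt
      · intro u hu
        rw [interior_Icc] at hu
        rw [(hd u).deriv]
        have hsub : t ^ (q - 1) ≤ u ^ (q - 1) + (t - u) ^ (q - 1) := by
          have := rpow_subadd (le_of_lt hu.1) (by linarith [hu.2] : (0:ℝ) ≤ t - u) hp0 hp1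
          simpa using this
        have : (-(u - t)) = t - u := by ring
        rw [this]
        nlinarith [hsub]
    have h0 : g t = 0 := by simp [hg, Real.zero_rpow hq0]
    have := hanti (Set.mem_Icc.2 ⟨hs, le_of_lt h⟩) (Set.mem_Icc.2 ⟨ht, le_rfl⟩) (le_of_lt h)
    rw [h0] at this
    simp only [hg] at this
    linarith

section cfcLemmas
variable {n : ℕ} {M : Matrix (Fin n) (Fin n) ℂ}
variable (h : M.IsHermitian)

local notation "U" => (h.eigenvectorUnitary : Matrix (Fin n) (Fin n) ℂ)

lemma my_cfc_def (f : ℝ → ℝ) :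
    h.cfc f = U * diagonal (Complex.ofReal ∘ f ∘ h.eigenvalues) * star U := rfl

lemma my_cfc_one : h.cfc (fun _ => 1) = 1 := by
  rw [my_cfc_def]
  have : diagonal (Complex.ofReal ∘ (fun _ : ℝ => (1:ℝ)) ∘ h.eigenvalues) = (1 : Matrix (Fin n) (Fin n) ℂ) := by
    simp [Function.comp_def]
  rw [this, mul_one, Unitary.mul_star_self_of_mem (SetLike.coe_mem _)]

lemma my_cfc_id : h.cfc (fun x => x) = M := by
  rw [my_cfc_def]
  exact (h.spectral_theorem).symm

lemma my_cfc_add (f g : ℝ → ℝ) : h.cfc (fun x => f x + g x) = h.cfc f + h.cfc g := by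
  simp only [my_cfc_def]
  rw [← add_mul, ← mul_add]
  have : (Complex.ofReal ∘ (fun x => f x + g x) ∘ h.eigenvalues)
      = (fun i => (Complex.ofReal ∘ f ∘ h.eigenvalues) i + (Complex.ofReal ∘ g ∘ h.eigenvalues) i) := by
    ext i; simp
  rw [this, diagonal_add]

lemma my_cfc_smul (c : ℝ) (f : ℝ → ℝ) : h.cfc (fun x => c * f x) = (c : ℂ) • h.cfc f := by
  simp only [my_cfc_def]
  have : (Complex.ofReal ∘ (fun x => c * f x) ∘ h.eigenvalues)
      = (c : ℂ) • (Complex.ofReal ∘ f ∘ h.eigenvalues) := by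
    ext i; simp
  rw [this, diagonal_smul, mul_smul_comm, smul_mul_assoc]

lemma my_cfc_mul (f g : ℝ → ℝ) : h.cfc f * h.cfc g = h.cfc (fun x => f x * g x) := by
  simp only [my_cfc_def]
  have : ∀ a b c d e f : Matrix (Fin n) (Fin n) ℂ, a * b * c * (d * e * f) = a * (b * (c * d) * e) * f := by
    intros; simp only [mul_assoc]
  rw [this, Unitary.star_mul_self_of_mem (SetLike.coe_mem _), mul_one, diagonal_mul_diagonal]
  have h4 : (fun i => (Complex.ofReal ∘ f ∘ h.eigenvalues) i * (Complex.ofReal ∘ g ∘ h.eigenvalues) i)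
      = (Complex.ofReal ∘ (fun x => f x * g x) ∘ h.eigenvalues) := by
    ext i; simp
  rw [h4]

lemma my_cfc_herm (f : ℝ → ℝ) : (h.cfc f).IsHermitian := by
  rw [my_cfc_def]
  apply Matrix.isHermitian_mul_mul_conjTranspose
  rw [Matrix.isHermitian_diagonal_iff]
  intro i
  simp [_root_.IsSelfAdjoint, RCLike.star_def, Complex.conj_ofReal]

lemma my_cfc_psd (f : ℝ → ℝ) (hf : ∀ i, 0 ≤ f (h.eigenvalues i)) : (h.cfc f).PosSemidef := by
  rw [my_cfc_def]
  apply Matrix.PosSemidef.mul_mul_conjTranspose_same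
  refine posSemidef_diagonal_iff.mpr fun i => ?_
  rw [Function.comp_apply, Complex.le_def]
  simpa using hf i

lemma my_qf_cfc (f : ℝ → ℝ) (x : Fin n → ℂ) :
    star x ⬝ᵥ (h.cfc f) *ᵥ x
      = ((∑ i, f (h.eigenvalues i) * Complex.normSq ((star U *ᵥ x) i) : ℝ) : ℂ) := by
  rw [my_cfc_def]
  set y := star U *ᵥ x with hy
  have h1 : (U * diagonal (Complex.ofReal ∘ f ∘ h.eigenvalues) * star U) *ᵥ x
      = U *ᵥ (diagonal (Complex.ofReal ∘ f ∘ h.eigenvalues) *ᵥ y) := by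
    rw [hy, mulVec_mulVec, mulVec_mulVec, mul_assoc]
  rw [h1, dotProduct_mulVec]
  have h2 : star x ᵥ* U = star y := by
    rw [hy, star_mulVec, star_eq_conjTranspose, conjTranspose_conjTranspose]
  rw [h2]
  simp only [dotProduct, mulVec_diagonal, Pi.star_apply, Function.comp_apply]
  push_cast
  congr 1
  ext i
  rw [mul_comm (star (y i)), mul_assoc, RCLike.star_def, Complex.mul_conj]

end cfcLemmas

section matside
variable {n : ℕ} {M : Matrix (Fin n) (Fin n) ℂ}
variable {n : ℕ} {M : Matrix (Fin n) (Fin n) ℂ}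

lemma dot_star_self (x : Fin n → ℂ) :
    star x ⬝ᵥ x = ((∑ i, Complex.normSq (x i) : ℝ) : ℂ) := by
  simp only [dotProduct, Pi.star_apply]
  push_cast
  congr 1
  ext i
  rw [mul_comm, RCLike.star_def, Complex.mul_conj]

lemma my_qf_self (h : M.IsHermitian) (x : Fin n → ℂ) :
    star x ⬝ᵥ M *ᵥ x
      = ((∑ i, h.eigenvalues i * Complex.normSq ((star (h.eigenvectorUnitary : Matrix (Fin n) (Fin n) ℂ) *ᵥ x) i) : ℝ) : ℂ) := by
  conv_lhs => rw [← my_cfc_id h]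
  exact my_qf_cfc h _ x

lemma my_w_sum (h : M.IsHermitian) (x : Fin n → ℂ) :
    ∑ i, Complex.normSq ((star (h.eigenvectorUnitary : Matrix (Fin n) (Fin n) ℂ) *ᵥ x) i)
      = ∑ i, Complex.normSq (x i) := by
  have h1 := my_qf_cfc h (fun _ => 1) x
  rw [my_cfc_one h, one_mulVec, dot_star_self] at h1
  simp only [one_mul] at h1
  exact_mod_cast h1.symm

lemma matAbs_eq (h : M.IsHermitian) : matAbs M = h.cfc (fun t => |t|) := by
  have hMM := (Matrix.posSemidef_conjTranspose_mul_self M).1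
  have hs : IsSelfAdjoint M := h
  have e1 : matAbs M = hMM.cfc Real.sqrt := rfl
  have e2 : Mᴴ * M = cfc (fun x : ℝ => x * x) M := by
    rw [cfc_mul (fun x : ℝ => x) (fun x : ℝ => x) M, cfc_id' ℝ M, h.eq]
  rw [e1, ← hMM.cfc_eq, ← h.cfc_eq, e2, ← cfc_comp' (g := Real.sqrt) (f := fun x : ℝ => x * x) (ha := hs)]
  congr 1
  ext t
  simp [Real.sqrt_mul_self_eq_abs]

lemma psd_half {X : Matrix (Fin n) (Fin n) ℂ} (hX : X.PosSemidef) :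
    ((2 : ℂ)⁻¹ • X).PosSemidef := by
  have h2 : ((2 : ℂ)⁻¹) = (((2:ℝ)⁻¹ : ℝ) : ℂ) := by push_cast; ring
  rw [posSemidef_iff_dotProduct_mulVec]
  constructor
  · rw [Matrix.IsHermitian, conjTranspose_smul, hX.1.eq, h2, RCLike.star_def,
      Complex.conj_ofReal]
  · intro x
    rw [smul_mulVec, dotProduct_smul, h2]
    have := hX.dotProduct_mulVec_nonneg x
    rw [smul_eq_mul]
    apply mul_nonneg _ this
    rw [Complex.le_def]
    simp
end matside

section RealMain
variable {N : ℕ} (q : ℝ)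

lemma pair_ineq (hq1 : 1 ≤ q) (hq2 : q ≤ 2) {a b : ℝ} (ha : 0 ≤ a) (hb : 0 ≤ b) :
    (a ^ q + b ^ q) / 2 ≤ ((a + b) / 2) ^ q + |(a - b) / 2| ^ q := by
  have ht : 0 ≤ (a + b) / 2 := by linarith
  have h1 := subquad q hq1 hq2 ha ht
  have h2 := subquad q hq1 hq2 hb ht
  have e1 : |a - (a + b) / 2| = |(a - b) / 2| := by congr 1; ring
  have e2 : |b - (a + b) / 2| = |(a - b) / 2| := by
    rw [show b - (a + b)/2 = -((a - b)/2) by ring, abs_neg]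
  rw [e1] at h1; rw [e2] at h2
  nlinarith [h1, h2]

lemma my_jensen (hq1 : 1 ≤ q) (z w : Fin N → ℝ) (hw : ∀ i, 0 ≤ w i)
    (hw1 : ∑ i, w i = 1) (hz : ∀ i, 0 ≤ z i) :
    (∑ i, z i * w i) ^ q ≤ ∑ i, z i ^ q * w i := by
  have := Real.rpow_arith_mean_le_arith_mean_rpow Finset.univ w z
    (fun i _ => hw i) hw1 (fun i _ => hz i) hq1
  calc (∑ i, z i * w i) ^ q = (∑ i, w i * z i) ^ q := by
        congr 1; exact Finset.sum_congr rfl fun i _ => mul_comm _ _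
    _ ≤ ∑ i, w i * z i ^ q := this
    _ = ∑ i, z i ^ q * w i := Finset.sum_congr rfl fun i _ => mul_comm _ _

lemma step1 (hq1 : 1 ≤ q) (hq2 : q ≤ 2) {m M : ℝ} (lam w : Fin N → ℝ)
    (hw : ∀ i, 0 ≤ w i) (hw1 : ∑ i, w i = 1)
    (hl1 : ∀ i, m ≤ lam i) (hl2 : ∀ i, lam i ≤ M) (hm : 0 ≤ m) :
    ∑ i, lam i ^ q * w i ≤ (∑ i, lam i * w i) ^ q + (M - m) ^ q := by
  set a := ∑ i, lam i * w i with ha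
  have ham : m ≤ a := by
    have : ∑ i, m * w i ≤ a := by
      apply Finset.sum_le_sum
      exact fun i _ => mul_le_mul_of_nonneg_right (hl1 i) (hw i)
    calc m = m * ∑ i, w i := by rw [hw1, mul_one]
      _ = ∑ i, m * w i := by rw [Finset.mul_sum]
      _ ≤ a := this
  have haM : a ≤ M := by
    have : a ≤ ∑ i, M * w i := by
      apply Finset.sum_le_sum
      exact fun i _ => mul_le_mul_of_nonneg_right (hl2 i) (hw i)
    calc a ≤ ∑ i, M * w i := this
      _ = M * ∑ i, w i := by rw [Finset.mul_sum]
      _ = M := by rw [hw1, mul_one]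
  have ha0 : 0 ≤ a := le_trans hm ham
  have key : ∀ i, lam i ^ q * w i
      ≤ (a ^ q + q * a ^ (q - 1) * (lam i - a) + (M - m) ^ q) * w i := by
    intro i
    apply mul_le_mul_of_nonneg_right _ (hw i)
    have h1 := subquad q hq1 hq2 (le_trans hm (hl1 i)) ha0
    have h2 : |lam i - a| ^ q ≤ (M - m) ^ q := by
      apply Real.rpow_le_rpow (abs_nonneg _) _ (by linarith)
      rw [abs_le]
      constructor <;> [linarith [hl1 i]; linarith [hl2 i]]
    linarith
  calc ∑ i, lam i ^ q * w i
      ≤ ∑ i, (a ^ q + q * a ^ (q - 1) * (lam i - a) + (M - m) ^ q) * w i :=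
        Finset.sum_le_sum fun i _ => key i
    _ = a ^ q + (M - m) ^ q := by
        have e : ∀ i, (a ^ q + q * a ^ (q - 1) * (lam i - a) + (M - m) ^ q) * w i
            = (a ^ q + (M - m) ^ q - q * a ^ (q - 1) * a) * w i
              + q * a ^ (q - 1) * (lam i * w i) := fun i => by ring
        rw [Finset.sum_congr rfl (fun i _ => e i), Finset.sum_add_distrib,
          ← Finset.mul_sum, ← Finset.mul_sum, hw1, ← ha]
        ring

variable {N : ℕ} (q : ℝ)

lemma real_main (hq1 : 1 ≤ q) (hq2 : q ≤ 2)
    (al be ga de wA wB wC wE : Fin N → ℝ) (mA MA mB MB : ℝ)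
    (hwA : ∀ i, 0 ≤ wA i) (hwB : ∀ i, 0 ≤ wB i) (hwC : ∀ i, 0 ≤ wC i) (hwE : ∀ i, 0 ≤ wE i)
    (hwA1 : ∑ i, wA i = 1) (hwB1 : ∑ i, wB i = 1) (hwC1 : ∑ i, wC i = 1) (hwE1 : ∑ i, wE i = 1)
    (hal1 : ∀ i, mA ≤ al i) (hal2 : ∀ i, al i ≤ MA) (hmA : 0 ≤ mA)
    (hbe1 : ∀ i, mB ≤ be i) (hbe2 : ∀ i, be i ≤ MB) (hmB : 0 ≤ mB)
    (hga : ∀ i, 0 ≤ ga i) (hde : ∀ i, 0 ≤ de i)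
    (hc : ∑ i, ga i * wC i = (∑ i, al i * wA i + ∑ i, be i * wB i) / 2)
    (he : |(∑ i, al i * wA i - ∑ i, be i * wB i) / 2| ≤ ∑ i, de i * wE i) :
    2⁻¹ * (∑ i, al i ^ q * wA i + ∑ i, be i ^ q * wB i)
      ≤ ∑ i, ga i ^ q * wC i + ∑ i, de i ^ q * wE i + ((MA - mA) ^ q + (MB - mB) ^ q) / 2 := by
  set a := ∑ i, al i * wA i with hadef
  set b := ∑ i, be i * wB i with hbdef
  have ha0 : 0 ≤ a := by
    apply Finset.sum_nonneg; intro i _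
    exact mul_nonneg (le_trans hmA (hal1 i)) (hwA i)
  have hb0 : 0 ≤ b := by
    apply Finset.sum_nonneg; intro i _
    exact mul_nonneg (le_trans hmB (hbe1 i)) (hwB i)
  have s1 : ∑ i, al i ^ q * wA i ≤ a ^ q + (MA - mA) ^ q :=
    step1 q hq1 hq2 al wA hwA hwA1 hal1 hal2 hmA
  have s2 : ∑ i, be i ^ q * wB i ≤ b ^ q + (MB - mB) ^ q :=
    step1 q hq1 hq2 be wB hwB hwB1 hbe1 hbe2 hmB
  have s3 : (a ^ q + b ^ q) / 2 ≤ ((a + b) / 2) ^ q + |(a - b) / 2| ^ q :=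
    pair_ineq q hq1 hq2 ha0 hb0
  have hee : 0 ≤ ∑ i, de i * wE i := le_trans (abs_nonneg _) he
  have s4 : |(a - b) / 2| ^ q ≤ (∑ i, de i * wE i) ^ q :=
    Real.rpow_le_rpow (abs_nonneg _) he (by linarith)
  have s5 : ((a + b) / 2) ^ q = (∑ i, ga i * wC i) ^ q := by rw [hc]
  have s6 : (∑ i, ga i * wC i) ^ q ≤ ∑ i, ga i ^ q * wC i :=
    my_jensen q hq1 ga wC hwC hwC1 hga
  have s7 : (∑ i, de i * wE i) ^ q ≤ ∑ i, de i ^ q * wE i :=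
    my_jensen q hq1 de wE hwE hwE1 hde
  linarith

end RealMain

end Auxiliary

/-- reverse power-mean inequality for `1 ≤ q ≤ 2`. -/
theorem power_mean_reverse {n : ℕ} (q : ℝ) (hq1 : 1 ≤ q) (hq2 : q ≤ 2)
    (A B : Matrix (Fin n) (Fin n) ℂ) (hA : A.PosSemidef) (hB : B.PosSemidef) :
    ∃ V ∈ Matrix.unitaryGroup (Fin n) ℂ,
      Loewner ((2 : ℂ)⁻¹ • (mfun (fun x => Real.rpow x q) A + mfun (fun x => Real.rpow x q) B))
        (V * mfun (fun x => Real.rpow x q) ((2 : ℂ)⁻¹ • (A + B)) * star V +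
          mfun (fun x => Real.rpow x q) ((2 : ℂ)⁻¹ • matAbs (A - B)) +
          (((Real.rpow (lmax A - lmin A) q + Real.rpow (lmax B - lmin B) q) / 2 : ℝ) : ℂ) •
            1) := by
  classical
  have hA1 : A.IsHermitian := hA.1
  have hB1 : B.IsHermitian := hB.1
  have hCp : ((2:ℂ)⁻¹ • (A + B)).PosSemidef := psd_half (hA.add hB)
  have hC1 : ((2:ℂ)⁻¹ • (A + B)).IsHermitian := hCp.1
  have hD : (A - B).IsHermitian := hA1.sub hB1
  have hEeq : (2:ℂ)⁻¹ • matAbs (A - B) = hD.cfc (fun t => 2⁻¹ * |t|) := by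
    rw [matAbs_eq hD, my_cfc_smul hD (2⁻¹ : ℝ) (fun t => |t|)]
    norm_num
  have hEp : ((2:ℂ)⁻¹ • matAbs (A - B)).PosSemidef := by
    rw [hEeq]; exact my_cfc_psd hD _ (fun i => by positivity)
  have hE1 : ((2:ℂ)⁻¹ • matAbs (A - B)).IsHermitian := hEp.1
  set f : ℝ → ℝ := fun x => Real.rpow x q with hf
  set r : ℝ := ((Real.rpow (lmax A - lmin A) q + Real.rpow (lmax B - lmin B) q) / 2 : ℝ) with hr
  refine ⟨1, one_mem _, ?_⟩
  rw [Loewner, one_mul, star_one, mul_one]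
  simp only [mfun, dif_pos hA1, dif_pos hB1, dif_pos hC1, dif_pos hE1]
  set RHS := hC1.cfc f + hE1.cfc f + (r : ℂ) • 1 with hRHS
  set LHS := (2:ℂ)⁻¹ • (hA1.cfc f + hB1.cfc f) with hLHS
  have hfA : ∀ i, 0 ≤ f (hA1.eigenvalues i) := fun i => Real.rpow_nonneg (hA.eigenvalues_nonneg i) q
  have hfB : ∀ i, 0 ≤ f (hB1.eigenvalues i) := fun i => Real.rpow_nonneg (hB.eigenvalues_nonneg i) q
  rw [posSemidef_iff_dotProduct_mulVec]
  constructor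
  · -- Hermitian
    apply Matrix.IsHermitian.sub
    · apply Matrix.IsHermitian.add
      · exact (my_cfc_herm hC1 f).add (my_cfc_herm hE1 f)
      · rw [Matrix.IsHermitian, conjTranspose_smul, conjTranspose_one, RCLike.star_def,
          Complex.conj_ofReal]
    · exact (psd_half (((my_cfc_psd hA1 f hfA)).add (my_cfc_psd hB1 f hfB))).1
  · -- quadratic form
    have main : ∀ y : Fin n → ℂ, (∑ i, Complex.normSq (y i)) = 1 →
        0 ≤ star y ⬝ᵥ (RHS - LHS) *ᵥ y := by
      intro y hy
      have hn : Nonempty (Fin n) := by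
        rcases Nat.eq_zero_or_pos n with h0 | h0
        · exfalso; subst h0; simp at hy
        · exact ⟨⟨0, h0⟩⟩
      -- weights
      set wA := fun i => Complex.normSq ((star (hA1.eigenvectorUnitary : Matrix (Fin n) (Fin n) ℂ) *ᵥ y) i) with hwAdef
      set wB := fun i => Complex.normSq ((star (hB1.eigenvectorUnitary : Matrix (Fin n) (Fin n) ℂ) *ᵥ y) i) with hwBdef
      set wC := fun i => Complex.normSq ((star (hC1.eigenvectorUnitary : Matrix (Fin n) (Fin n) ℂ) *ᵥ y) i) with hwCdef
      set wE := fun i => Complex.normSq ((star (hE1.eigenvectorUnitary : Matrix (Fin n) (Fin n) ℂ) *ᵥ y) i) with hwEdef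
      set wD := fun i => Complex.normSq ((star (hD.eigenvectorUnitary : Matrix (Fin n) (Fin n) ℂ) *ᵥ y) i) with hwDdef
      set al := hA1.eigenvalues with hal
      set be := hB1.eigenvalues with hbe
      set ga := hC1.eigenvalues with hga
      set de := hE1.eigenvalues with hde
      set dl := hD.eigenvalues with hdl
      -- sums of weights
      have hwA1 : ∑ i, wA i = 1 := by rw [hwAdef, my_w_sum hA1 y, hy]
      have hwB1 : ∑ i, wB i = 1 := by rw [hwBdef, my_w_sum hB1 y, hy]
      have hwC1 : ∑ i, wC i = 1 := by rw [hwCdef, my_w_sum hC1 y, hy]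
      have hwE1 : ∑ i, wE i = 1 := by rw [hwEdef, my_w_sum hE1 y, hy]
      -- a, b
      set a := ∑ i, al i * wA i with ha
      set b := ∑ i, be i * wB i with hb
      have hQA : star y ⬝ᵥ A *ᵥ y = (a : ℂ) := my_qf_self hA1 y
      have hQB : star y ⬝ᵥ B *ᵥ y = (b : ℂ) := my_qf_self hB1 y
      -- c relation
      have hcC : ∑ i, ga i * wC i = (a + b) / 2 := by
        have h1 : star y ⬝ᵥ ((2:ℂ)⁻¹ • (A + B)) *ᵥ y = (((a + b) / 2 : ℝ) : ℂ) := by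
          rw [smul_mulVec, dotProduct_smul, add_mulVec, dotProduct_add, hQA, hQB]
          simp only [smul_eq_mul]
          push_cast
          ring
        have h2 := my_qf_self hC1 y
        rw [h1] at h2
        exact_mod_cast h2.symm
      -- d relation
      have hDsum : ∑ i, dl i * wD i = a - b := by
        have h1 : star y ⬝ᵥ (A - B) *ᵥ y = ((a - b : ℝ) : ℂ) := by
          rw [sub_mulVec, dotProduct_sub, hQA, hQB]; push_cast; ring
        have h2 := my_qf_self hD y
        rw [h1] at h2
        exact_mod_cast h2.symm
      have hEsum : ∑ i, de i * wE i = ∑ i, 2⁻¹ * |dl i| * wD i := by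
        have h1 := my_qf_self hE1 y
        have h2 : star y ⬝ᵥ ((2:ℂ)⁻¹ • matAbs (A - B)) *ᵥ y
            = ((∑ i, 2⁻¹ * |dl i| * wD i : ℝ) : ℂ) := by
          rw [hEeq]; exact my_qf_cfc hD _ y
        rw [h2] at h1
        exact_mod_cast h1.symm
      have he : |(a - b) / 2| ≤ ∑ i, de i * wE i := by
        rw [hEsum, ← hDsum]
        calc |(∑ i, dl i * wD i) / 2| = |∑ i, 2⁻¹ * (dl i * wD i)| := by
              rw [← Finset.mul_sum]; congr 1; ring
          _ ≤ ∑ i, |2⁻¹ * (dl i * wD i)| := Finset.abs_sum_le_sum_abs _ _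
          _ = ∑ i, 2⁻¹ * |dl i| * wD i := by
              apply Finset.sum_congr rfl
              intro i _
              rw [abs_mul, abs_mul, abs_of_nonneg (Complex.normSq_nonneg _),
                abs_of_nonneg (by norm_num : (0:ℝ) ≤ (2:ℝ)⁻¹)]
              ring
      -- bounds on eigenvalues
      have hal1 : ∀ i, lmin A ≤ al i := by
        intro i
        rw [lmin, dif_pos hA1]
        exact ciInf_le (Set.Finite.bddBelow (Set.finite_range _)) i
      have hal2 : ∀ i, al i ≤ lmax A := by
        intro i
        rw [lmax, dif_pos hA1]
        exact le_ciSup (Set.Finite.bddAbove (Set.finite_range _)) i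
      have hmA : 0 ≤ lmin A := by
        rw [lmin, dif_pos hA1]
        exact le_ciInf fun i => hA.eigenvalues_nonneg i
      have hbe1 : ∀ i, lmin B ≤ be i := by
        intro i
        rw [lmin, dif_pos hB1]
        exact ciInf_le (Set.Finite.bddBelow (Set.finite_range _)) i
      have hbe2 : ∀ i, be i ≤ lmax B := by
        intro i
        rw [lmax, dif_pos hB1]
        exact le_ciSup (Set.Finite.bddAbove (Set.finite_range _)) i
      have hmB : 0 ≤ lmin B := by
        rw [lmin, dif_pos hB1]
        exact le_ciInf fun i => hB.eigenvalues_nonneg i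
      have hgaP : ∀ i, 0 ≤ ga i := fun i => hCp.eigenvalues_nonneg i
      have hdeP : ∀ i, 0 ≤ de i := fun i => hEp.eigenvalues_nonneg i
      -- the real inequality
      have hreal := real_main q hq1 hq2 al be ga de wA wB wC wE (lmin A) (lmax A) (lmin B) (lmax B)
        (fun i => Complex.normSq_nonneg _) (fun i => Complex.normSq_nonneg _)
        (fun i => Complex.normSq_nonneg _) (fun i => Complex.normSq_nonneg _)
        hwA1 hwB1 hwC1 hwE1 hal1 hal2 hmA hbe1 hbe2 hmB hgaP hdeP hcC he
      -- expand quadratic form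
      rw [hRHS, hLHS, sub_mulVec, dotProduct_sub, add_mulVec, dotProduct_add, add_mulVec,
        dotProduct_add, smul_mulVec, dotProduct_smul, smul_mulVec, dotProduct_smul,
        add_mulVec, dotProduct_add, one_mulVec, dot_star_self, hy,
        my_qf_cfc hC1 f y, my_qf_cfc hE1 f y, my_qf_cfc hA1 f y, my_qf_cfc hB1 f y]
      have hcast : ((∑ i, f (ga i) * wC i : ℝ) : ℂ) + ((∑ i, f (de i) * wE i : ℝ) : ℂ)
            + (r : ℂ) • ((1:ℝ) : ℂ) - (2:ℂ)⁻¹ • (((∑ i, f (al i) * wA i : ℝ) : ℂ) + ((∑ i, f (be i) * wB i : ℝ) : ℂ))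
          = (((∑ i, f (ga i) * wC i + ∑ i, f (de i) * wE i + r
              - 2⁻¹ * (∑ i, f (al i) * wA i + ∑ i, f (be i) * wB i) : ℝ)) : ℂ) := by
        push_cast
        simp only [smul_eq_mul]
        ring
      rw [hcast]
      rw [Complex.zero_le_real]
      have hfeq : ∀ t : ℝ, f t = t ^ q := fun t => rfl
      have hreq : r = ((lmax A - lmin A) ^ q + (lmax B - lmin B) ^ q) / 2 := rfl
      simp only [hfeq, hreq]
      linarith
    -- scaling argument
    intro x
    by_cases hx0 : x = 0
    · subst hx0; simp
    · set S := ∑ i, Complex.normSq (x i) with hS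
      have hS0 : 0 < S := by
        apply Finset.sum_pos'
        · exact fun i _ => Complex.normSq_nonneg _
        · obtain ⟨i, hi⟩ := Function.ne_iff.mp hx0
          exact ⟨i, Finset.mem_univ i, by simpa [Complex.normSq_pos] using hi⟩
      set t := (Real.sqrt S)⁻¹ with ht
      have ht0 : 0 < t := by positivity
      set u := ((t : ℝ) : ℂ) • x with hu
      have hu1 : ∑ i, Complex.normSq (u i) = 1 := by
        rw [hu]
        simp only [Pi.smul_apply, smul_eq_mul, Complex.normSq_mul, Complex.normSq_ofReal]
        rw [← Finset.mul_sum, ← hS, ht]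
        have h3 := Real.sq_sqrt hS0.le
        have h4 : √S ≠ 0 := by positivity
        field_simp
        linarith [h3]
      have key := main u hu1
      have hscale : star u ⬝ᵥ (RHS - LHS) *ᵥ u
          = (((t * t : ℝ)) : ℂ) * (star x ⬝ᵥ (RHS - LHS) *ᵥ x) := by
        rw [hu, mulVec_smul, star_smul, smul_dotProduct, dotProduct_smul]
        push_cast
        simp only [RCLike.star_def, Complex.conj_ofReal, smul_eq_mul]
        ring
      rw [hscale] at key
      have htt : (0:ℝ) < t * t := by positivity
      have hinv : star x ⬝ᵥ (RHS - LHS) *ᵥ x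
          = (((t * t)⁻¹ : ℝ) : ℂ) * ((((t * t : ℝ)) : ℂ) * (star x ⬝ᵥ (RHS - LHS) *ᵥ x)) := by
        rw [← mul_assoc, ← Complex.ofReal_mul, inv_mul_cancel₀ htt.ne', Complex.ofReal_one, one_mul]
      rw [hinv]
      apply mul_nonneg _ key
      rw [Complex.zero_le_real]
      positivity
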